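/- Let a, b, c be nonnegative integers. Define the a×a matrices over ℚ, indexed by i,j ∈ {1,…,a}: M_{i,j} := C(b+c, b+i−j); L_{i,j} := (−1)^{i+j} · C(i−1, j−1) · (c)_{i−j} / (b+j)_{i−j} for i ≥ j and L_{i,j} := 0 for i < j; T_{i,j} := (−1)^{i+j} · C(j−1, i−1) · (b)_{j−i} / (c+i)_{j−i} for j ≥ i and T_{i,j} := 0 for j < i; and the diagonal matrix D with D_{i,i} := (b+i−1)!·(c+i−1)! / ( (b+c+i−1)!·(i−1)! ). Then M is invertible over ℚ and M^{−1} = T·D·L. -/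

import Mathlib

open Finset

noncomputable section

/-- Binomial coefficient with integer arguments, equal to `0` whenever `k < 0` or `k > n`. -/
def ibinom (n k : ℤ) : ℚ :=
  if 0 ≤ k ∧ k ≤ n then (n.toNat.choose k.toNat : ℚ) else 0

/-- The Pochhammer symbol (rising factorial) `x (x+1) ⋯ (x+n-1)`. -/
def poch (x : ℚ) (n : ℕ) : ℚ := (ascPochhammer ℚ n).eval x

/-- MacMahon's product `M(a,b,c)`. -/
def macmahon (a b c : ℕ) : ℚ :=
  ∏ i ∈ Finset.range a,
    ((Nat.factorial i : ℚ) * (Nat.factorial (b + c + i) : ℚ)) /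
      ((Nat.factorial (b + i) : ℚ) * (Nat.factorial (c + i) : ℚ))

/-- The matrix `Q(a,b,c,d,p)` (with `1`-based indices `i, j ∈ {1, …, a+d}`):
rows/columns with index `≤ a` are lateral, the rest are intrusive. -/
def Qmat (a b c d : ℕ) (p : ℤ) : Matrix (Fin (a + d)) (Fin (a + d)) ℚ :=
  Matrix.of fun i j =>
    if (i : ℕ) < a then
      if (j : ℕ) < a then
        ibinom ((b : ℤ) + c) ((c : ℤ) - (((i : ℕ) : ℤ) + 1) + (((j : ℕ) : ℤ) + 1))
      else
        ibinom (2 * (((j : ℕ) : ℤ) - a + 1) - 1)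
          ((((j : ℕ) : ℤ) - a + 1) - (((i : ℕ) : ℤ) + 1) + p)
    else
      if (j : ℕ) < a then
        ibinom ((b : ℤ) + c - 2 * (((i : ℕ) : ℤ) - a + 1) + 1)
          ((c : ℤ) - (((i : ℕ) : ℤ) - a + 1) + (((j : ℕ) : ℤ) + 1) - p)
      else
        ibinom (2 * (((j : ℕ) : ℤ) - ((i : ℕ) : ℤ))) (((j : ℕ) : ℤ) - ((i : ℕ) : ℤ))

/-- `E(a,b,c,d,p) = det Q(a,b,c,d,p)`, the signed count of lozenge tilings of the
`(a,b,c)`-hexagon with an even intrusion of length `d` at position `p`. -/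
def E (a b c d : ℕ) (p : ℤ) : ℚ := (Qmat a b c d p).det

/-!
Write `u i = C(b+i, i)`, `v j = C(c+j, j)` and `P r` for the lower triangular Toeplitz matrix
`(C(r, i-j))`. MacMahon's matrix has the LU factorisation
`M = (diag u⁻¹ · P c · diag u) · D⁻¹ · (diag v⁻¹ · P b · diag v)ᵀ`;
entrywise this is the Pfaff–Saalschütz summation, proved by creative telescoping in `i`.
By Chu–Vandermonde `P r · P s = P (r + s)`, so the outer factors are inverted by replacing
`c` and `b` with `-c` and `-b`, and these inverses are exactly `L` and `T`.
-/

open Matrix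
open scoped Nat

namespace Matrix

variable {R : Type*}

def lowerToeplitz [Zero R] (n : ℕ) (f : ℕ → R) : Matrix (Fin n) (Fin n) R :=
  of fun i j => if (j : ℕ) ≤ i then f (i - j) else 0

theorem lowerToeplitz_mul [NonUnitalNonAssocSemiring R] (n : ℕ) (f g : ℕ → R) :
    lowerToeplitz n f * lowerToeplitz n g =
      lowerToeplitz n fun k => ∑ p ∈ antidiagonal k, f p.1 * g p.2 := by
  ext i k
  simp only [lowerToeplitz, mul_apply, of_apply, ite_mul, zero_mul, mul_ite, mul_zero]
  split_ifs with hki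
  · refine sum_bij_ne_zero (fun m _ _ => ((i : ℕ) - m, (m : ℕ) - k)) ?_ ?_ ?_ ?_
    · intro m _ hm
      split_ifs at hm <;> simp_all; omega
    · intro m₁ _ h₁ m₂ _ h₂ h
      simp only [Prod.mk.injEq] at h
      split_ifs at h₁ h₂ <;> simp_all; omega
    · intro p hp hp0
      rw [HasAntidiagonal.mem_antidiagonal] at hp
      refine ⟨⟨k + p.2, by omega⟩, mem_univ _, ?_, ?_⟩
      · simp only [if_pos (by omega : (k : ℕ) + p.2 ≤ i), if_pos (by omega : (k : ℕ) ≤ k + p.2)]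
        convert hp0 using 3 <;> omega
      · ext <;> simp only <;> omega
    · intro m _ hm
      split_ifs at hm ⊢ <;> simp_all
  · refine sum_eq_zero fun m _ => ?_
    split_ifs <;> first | rfl | omega

theorem lowerToeplitz_ite_zero [Zero R] [One R] (n : ℕ) :
    lowerToeplitz n (fun k => if k = 0 then (1 : R) else 0) = 1 := by
  ext i j
  simp only [lowerToeplitz, of_apply, one_apply, Fin.ext_iff]
  split_ifs <;> first | rfl | omega

variable [CommRing R] [BinomialRing R]

theorem lowerToeplitz_choose_mul (n : ℕ) (r s : R) :
    lowerToeplitz n (Ring.choose r) * lowerToeplitz n (Ring.choose s) =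
      lowerToeplitz n (Ring.choose (r + s)) := by
  rw [lowerToeplitz_mul]
  exact congrArg _ (funext fun k => (Ring.add_choose_eq k (Commute.all r s)).symm)

theorem lowerToeplitz_choose_zero (n : ℕ) : lowerToeplitz n (Ring.choose (0 : R)) = 1 := by
  rw [← lowerToeplitz_ite_zero]
  exact congrArg _ (funext (Ring.choose_zero_ite R))

end Matrix

theorem ibinom_natCast (n k : ℕ) : ibinom n k = n.choose k := by
  unfold ibinom
  split_ifs with h
  · simp
  · rw [Nat.choose_eq_zero_of_lt (by omega), Nat.cast_zero]

theorem ibinom_natCast_zero (n : ℕ) : ibinom n 0 = 1 := by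
  simpa using ibinom_natCast n 0

theorem ibinom_of_neg {n k : ℤ} (h : k < 0) : ibinom n k = 0 :=
  if_neg fun h' => by omega

theorem ibinom_of_lt {n k : ℤ} (h : n < k) : ibinom n k = 0 :=
  if_neg fun h' => by omega

theorem Nat.cast_choose_succ_right_mul {R : Type*} [Ring R] (n k : ℕ) :
    ((n.choose (k + 1) : ℕ) : R) * (k + 1) = n.choose k * ((n : R) - k) := by
  rcases le_or_gt k n with h | h
  · have := congrArg (Nat.cast : ℕ → R) (Nat.choose_succ_right_eq n k)
    push_cast [Nat.cast_sub h] at this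
    exact this
  · simp [Nat.choose_eq_zero_of_lt h, Nat.choose_eq_zero_of_lt (h.trans (Nat.lt_succ_self k))]

theorem ibinom_succ_right_mul (n : ℕ) (k : ℤ) :
    ibinom n (k + 1) * ((k : ℚ) + 1) = ibinom n k * ((n : ℚ) - k) := by
  rcases lt_or_ge k 0 with hk | hk
  · rcases eq_or_lt_of_le (show k + 1 ≤ 0 by omega) with hk1 | hk1
    · simp [show (k : ℚ) + 1 = 0 by exact_mod_cast hk1, ibinom_of_neg hk]
    · simp [ibinom_of_neg hk, ibinom_of_neg hk1]
  · lift k to ℕ using hk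
    have := Nat.cast_choose_succ_right_mul (R := ℚ) n k
    rw [← ibinom_natCast, ← ibinom_natCast] at this
    exact_mod_cast this

def saalschutzTerm (b c i j m : ℕ) : ℚ :=
  ibinom c ((i : ℤ) - m) * ibinom b ((j : ℤ) - m) * (b + c + m).choose m

theorem saalschutzTerm_of_lt {b c i j m : ℕ} (h : i < m) : saalschutzTerm b c i j m = 0 := by
  rw [saalschutzTerm, ibinom_of_neg (by omega), zero_mul, zero_mul]

-- Zeilberger's recurrence in `i`, with certificate `G m = m (j - b - m) · saalschutzTerm b c (i+1) j m`.
theorem saalschutzTerm_telescope (b c i j m : ℕ) :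
    ((b : ℚ) + i + 1 - j) * (i + 1) * saalschutzTerm b c (i + 1) j m
        - ((c : ℚ) + j - i) * (b + i + 1) * saalschutzTerm b c i j m
      = (m + 1) * ((j : ℚ) - b - (m + 1)) * saalschutzTerm b c (i + 1) j (m + 1)
        - m * ((j : ℚ) - b - m) * saalschutzTerm b c (i + 1) j m := by
  have h1 := ibinom_succ_right_mul c ((i : ℤ) - m)
  have h2 := ibinom_succ_right_mul b ((j : ℤ) - m - 1)
  have h3 : ((b + c + m + 1 : ℕ) : ℚ) * (b + c + m).choose m
      = (b + c + m + 1).choose (m + 1) * ((m : ℚ) + 1) := by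
    exact_mod_cast Nat.add_one_mul_choose_eq (b + c + m) m
  simp only [saalschutzTerm]
  push_cast at h1 h2 h3 ⊢
  rw [show (i : ℤ) + 1 - m = (i : ℤ) - m + 1 by ring, show (i : ℤ) + 1 - (m + 1) = (i : ℤ) - m by ring,
    show (j : ℤ) - (m + 1) = (j : ℤ) - m - 1 by ring, show (b + c + (m + 1) : ℕ) = b + c + m + 1 by ring]
  rw [show (j : ℤ) - m - 1 + 1 = (j : ℤ) - m by ring] at h2
  linear_combination
    (((b : ℚ) + i + 1 + m - j) * ibinom b ((j : ℤ) - m) * (b + c + m).choose m) * h1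
    - (((b : ℚ) + c + m + 1) * ibinom c ((i : ℤ) - m) * (b + c + m).choose m) * h2
    - (((b : ℚ) + m + 1 - j) * ibinom c ((i : ℤ) - m) * ibinom b ((j : ℤ) - m - 1)) * h3

theorem sum_saalschutzTerm_succ (b c i j : ℕ) :
    ((b : ℚ) + i + 1 - j) * (i + 1) * ∑ m ∈ range (i + 2), saalschutzTerm b c (i + 1) j m
      = ((c : ℚ) + j - i) * (b + i + 1) * ∑ m ∈ range (i + 1), saalschutzTerm b c i j m := by
  set G : ℕ → ℚ := fun m => m * ((j : ℚ) - b - m) * saalschutzTerm b c (i + 1) j m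
  have hG : G (i + 2) = 0 := by simp [G, saalschutzTerm_of_lt (show i + 1 < i + 2 by omega)]
  have hext : ∑ m ∈ range (i + 1), saalschutzTerm b c i j m
      = ∑ m ∈ range (i + 2), saalschutzTerm b c i j m := by
    rw [sum_range_succ _ (i + 1), saalschutzTerm_of_lt (by omega), add_zero]
  rw [hext, ← sub_eq_zero, mul_sum, mul_sum, ← sum_sub_distrib]
  calc ∑ m ∈ range (i + 2), _ = ∑ m ∈ range (i + 2), (G (m + 1) - G m) := by
        refine sum_congr rfl fun m _ => ?_
        simp only [G, saalschutzTerm_telescope]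
        push_cast
        ring
    _ = 0 := by rw [sum_range_sub G, hG]; simp [G]

theorem ibinom_mul_choose_add (b c j : ℕ) :
    ibinom b j * (b + c).choose b = ibinom (b + c) ((b : ℤ) - j) * (c + j).choose j := by
  rcases le_or_gt j b with hjb | hjb
  · rw [show (b : ℤ) - j = (b - j : ℕ) by omega, show (b : ℤ) + c = (b + c : ℕ) by push_cast; ring,
      ibinom_natCast, ibinom_natCast, ← Nat.choose_symm hjb, mul_comm]
    have := Nat.choose_mul (n := b + c) (hsk := Nat.sub_le b j)
    rw [show b + c - (b - j) = c + j by omega, show b - (b - j) = j by omega] at this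
    exact_mod_cast this
  · simp [ibinom_of_lt (show (b : ℤ) < j by omega), ibinom_of_neg (show (b : ℤ) - j < 0 by omega)]

theorem sum_saalschutzTerm_mul_choose_of_eq_add (b c i : ℕ) :
    (∑ m ∈ range (i + 1), saalschutzTerm b c i (b + i) m) * (b + c).choose b
      = ibinom (b + c) ((b : ℤ) + i - (b + i : ℕ)) * (b + i).choose i * (c + (b + i)).choose (b + i) := by
  rw [sum_eq_single_of_mem i (self_mem_range_succ i) fun m hm hmi => by
    rw [saalschutzTerm, ibinom_of_lt (n := b) (by simp at hm; omega), mul_zero, zero_mul]]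
  have := Nat.choose_mul (n := b + c + i) (k := b + i) (s := i) (by omega)
  rw [show b + c + i - i = b + c by omega, show b + i - i = b by omega] at this
  simp only [saalschutzTerm, sub_self, show ((b + i : ℕ) : ℤ) - i = b by push_cast; ring,
    show (b : ℤ) + i - (b + i : ℕ) = 0 by push_cast; ring]
  rw [← Nat.cast_zero (R := ℤ), ibinom_natCast, ibinom_natCast,
    show (b : ℤ) + c = (b + c : ℕ) by push_cast; ring, ibinom_natCast,
    show c + (b + i) = b + c + i by ring]
  simp only [Nat.choose_zero_right, Nat.choose_self, Nat.cast_one, one_mul]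
  rw [mul_comm (((b + i).choose i : ℕ) : ℚ)]
  exact_mod_cast this.symm

theorem sum_saalschutzTerm_mul_choose (b c i j : ℕ) :
    (∑ m ∈ range (i + 1), saalschutzTerm b c i j m) * (b + c).choose b
      = ibinom (b + c) ((b : ℤ) + i - j) * (b + i).choose i * (c + j).choose j := by
  induction i generalizing j with
  | zero => simpa [saalschutzTerm, ibinom_natCast_zero] using ibinom_mul_choose_add b c j
  | succ i ih =>
    by_cases hj : j = b + (i + 1)
    · subst hj
      exact sum_saalschutzTerm_mul_choose_of_eq_add b c (i + 1)
    have hA : ((b : ℚ) + i + 1 - j) * (i + 1) ≠ 0 := by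
      refine mul_ne_zero ?_ (by positivity)
      rw [sub_ne_zero]
      exact_mod_cast (Ne.symm hj)
    have h1 := ibinom_succ_right_mul (b + c) ((b : ℤ) + i - j)
    have h2 : ((b + i + 1 : ℕ) : ℚ) * (b + i).choose i = (b + i + 1).choose (i + 1) * ((i : ℚ) + 1) := by
      exact_mod_cast Nat.add_one_mul_choose_eq (b + i) i
    refine mul_left_cancel₀ hA ?_
    rw [← mul_assoc, sum_saalschutzTerm_succ, mul_assoc, ih]
    push_cast at h1 h2 ⊢
    rw [show (b : ℤ) + (i + 1) - j = (b : ℤ) + i - j + 1 by ring, show b + (i + 1) = b + i + 1 by ring]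
    linear_combination (-((b : ℚ) + i + 1) * (b + i).choose i * (c + j).choose j) * h1
      + (ibinom (b + c) ((b : ℤ) + i - j + 1) * ((b : ℚ) + i + 1 - j) * (c + j).choose j) * h2

theorem factorial_mul_choose_neg (r : ℚ) (n : ℕ) :
    n ! * Ring.choose (-r) n = (-1) ^ n * poch r n := by
  have h := Ring.factorial_nsmul_multichoose_eq_ascPochhammer r n
  rw [nsmul_eq_mul, Polynomial.ascPochhammer_smeval_eq_eval] at h
  rw [Ring.choose_neg', Units.smul_def, zsmul_eq_mul, Int.cast_negOnePow_natCast, poch, ← h]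
  ring

theorem factorial_mul_poch_add_one (q n : ℕ) : (q ! : ℚ) * poch ((q : ℚ) + 1) n = (q + n)! := by
  rw [poch, ← Nat.cast_add_one, ← Nat.cast_ascFactorial]
  exact_mod_cast Nat.factorial_mul_ascFactorial q n

theorem neg_one_pow_mul_choose_mul_poch_div_poch (b c : ℕ) {k m : ℕ} (h : k ≤ m) :
    (-1 : ℚ) ^ (m + k) * m.choose k * poch c (m - k) / poch (b + (k + 1)) (m - k)
      = ((b + m).choose m : ℚ)⁻¹ * Ring.choose (-(c : ℚ)) (m - k) * (b + k).choose k := by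
  obtain ⟨n, rfl⟩ := Nat.exists_eq_add_of_le h
  have hc := factorial_mul_choose_neg c n
  have hb := factorial_mul_poch_add_one (b + k) n
  rw [Nat.add_sub_cancel_left]
  rw [Nat.cast_choose ℚ (Nat.le_add_right k n), Nat.cast_choose ℚ (Nat.le_add_left (k + n) b),
    Nat.cast_choose ℚ (Nat.le_add_left k b), Nat.add_sub_cancel_left, Nat.add_sub_cancel,
    Nat.add_sub_cancel]
  push_cast at hb
  rw [show (b : ℚ) + (k + 1) = b + k + 1 by ring, ← add_assoc]
  have : poch ((b : ℚ) + k + 1) n ≠ 0 := by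
    intro h0; rw [h0, mul_zero] at hb; exact (Nat.factorial_ne_zero _) (by exact_mod_cast hb.symm)
  field_simp
  rw [← hb, show (-1 : ℚ) ^ (k + n + k) = (-1) ^ n by
    rw [show k + n + k = n + 2 * k by ring, pow_add, pow_mul]; norm_num]
  linear_combination (-((b + k)! : ℚ) * poch ((b : ℚ) + k + 1) n) * hc

theorem cast_choose_add_ne_zero (b i : ℕ) : ((b + i).choose i : ℚ) ≠ 0 :=
  Nat.cast_ne_zero.mpr (Nat.choose_pos (Nat.le_add_left i b)).ne'

def macmahonFactor (n b : ℕ) (r : ℚ) : Matrix (Fin n) (Fin n) ℚ :=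
  diagonal (fun i : Fin n => ((b + (i : ℕ)).choose i : ℚ)⁻¹) * lowerToeplitz n (Ring.choose r) *
    diagonal fun i : Fin n => ((b + (i : ℕ)).choose i : ℚ)

theorem macmahonFactor_apply (n b : ℕ) (r : ℚ) (i k : Fin n) :
    macmahonFactor n b r i k = if (k : ℕ) ≤ i then
      ((b + (i : ℕ)).choose i : ℚ)⁻¹ * Ring.choose r (i - k) * (b + (k : ℕ)).choose k else 0 := by
  simp only [macmahonFactor, mul_diagonal, diagonal_mul, lowerToeplitz, of_apply]
  split_ifs <;> ring

theorem macmahonFactor_natCast_apply (n b c : ℕ) (i k : Fin n) :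
    macmahonFactor n b c i k
      = ((b + (i : ℕ)).choose i : ℚ)⁻¹ * ibinom c ((i : ℕ) - (k : ℕ)) * (b + (k : ℕ)).choose k := by
  rw [macmahonFactor_apply]
  split_ifs with h
  · rw [Ring.choose_natCast, ← Nat.cast_sub h, ibinom_natCast]
  · rw [ibinom_of_neg (by omega), mul_zero, zero_mul]

theorem macmahonFactor_mul (n b : ℕ) (r s : ℚ) :
    macmahonFactor n b r * macmahonFactor n b s = macmahonFactor n b (r + s) := by
  have hu : (diagonal fun i : Fin n => ((b + (i : ℕ)).choose i : ℚ)) *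
      diagonal (fun i : Fin n => ((b + (i : ℕ)).choose i : ℚ)⁻¹) = 1 := by
    rw [diagonal_mul_diagonal, ← diagonal_one]
    exact congrArg _ (funext fun i => mul_inv_cancel₀ (cast_choose_add_ne_zero b i))
  simp only [macmahonFactor, Matrix.mul_assoc]
  rw [← Matrix.mul_assoc (diagonal _) (diagonal _), hu, Matrix.one_mul,
    ← Matrix.mul_assoc (lowerToeplitz _ _), lowerToeplitz_choose_mul]

theorem macmahonFactor_zero (n b : ℕ) : macmahonFactor n b 0 = 1 := by
  rw [macmahonFactor, lowerToeplitz_choose_zero, Matrix.mul_one, diagonal_mul_diagonal, ← diagonal_one]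
  exact congrArg _ (funext fun i => inv_mul_cancel₀ (cast_choose_add_ne_zero b i))

theorem choose_mul_inv_mul_choose (b c m : ℕ) :
    ((b + m).choose m : ℚ) * ((b + m)! * (c + m)! / ((b + c + m)! * m !) : ℚ)⁻¹ * (c + m).choose m
      = (b + c).choose b * (b + c + m).choose m := by
  rw [Nat.cast_choose ℚ (Nat.le_add_left m b), Nat.cast_choose ℚ (Nat.le_add_left m c),
    Nat.cast_choose ℚ (Nat.le_add_right b c), Nat.cast_choose ℚ (Nat.le_add_left m (b + c)),
    Nat.add_sub_cancel, Nat.add_sub_cancel, Nat.add_sub_cancel, Nat.add_sub_cancel_left]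
  field_simp

theorem sum_fin_saalschutzTerm_mul_choose (b c : ℕ) {a : ℕ} (i j : Fin a) :
    (∑ m : Fin a, saalschutzTerm b c i j m) * (b + c).choose b
      = ibinom (b + c) ((b : ℤ) + (i : ℕ) - (j : ℕ)) * (b + (i : ℕ)).choose i * (c + (j : ℕ)).choose j := by
  rw [Fin.sum_univ_eq_sum_range (saalschutzTerm b c i j),
    ← sum_subset (range_subset_range.mpr i.isLt) fun m _ hm => saalschutzTerm_of_lt (by simpa using hm)]
  exact sum_saalschutzTerm_mul_choose b c i j

theorem macmahon_eq_mul (a b c : ℕ) :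
    (of fun i j : Fin a => ibinom ((b : ℤ) + c) ((b : ℤ) + (((i : ℕ) : ℤ) + 1) - (((j : ℕ) : ℤ) + 1)))
      = macmahonFactor a b c *
          diagonal (fun m : Fin a => ((b + (m : ℕ))! * (c + (m : ℕ))! / ((b + c + (m : ℕ))! * (m : ℕ)!) : ℚ)⁻¹)
          * (macmahonFactor a c b)ᵀ := by
  ext i j
  rw [of_apply, mul_apply]
  simp only [mul_diagonal, transpose_apply, macmahonFactor_natCast_apply]
  trans ∑ m : Fin a, (((b + (i : ℕ)).choose i : ℚ)⁻¹ * ((c + (j : ℕ)).choose j : ℚ)⁻¹) *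
      (saalschutzTerm b c i j m * (b + c).choose b)
  · rw [← mul_sum, ← sum_mul, sum_fin_saalschutzTerm_mul_choose]
    have := cast_choose_add_ne_zero b i
    have := cast_choose_add_ne_zero c j
    field_simp
    congr 1
    ring
  · refine sum_congr rfl fun m _ => ?_
    rw [saalschutzTerm, mul_assoc _ _ ((b + c).choose b : ℚ), mul_comm _ ((b + c).choose b : ℚ),
      ← choose_mul_inv_mul_choose]
    ring

/-- Inverse of MacMahon's matrix: `M⁻¹ = T · D · L`. -/
theorem macmahon_inverse (a b c : ℕ) :
    let M : Matrix (Fin a) (Fin a) ℚ := Matrix.of fun i j =>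
      ibinom ((b : ℤ) + c) ((b : ℤ) + (((i : ℕ) : ℤ) + 1) - (((j : ℕ) : ℤ) + 1))
    let L : Matrix (Fin a) (Fin a) ℚ := Matrix.of fun i j =>
      if (j : ℕ) ≤ (i : ℕ) then
        (-1 : ℚ) ^ ((i : ℕ) + (j : ℕ)) * (Nat.choose (i : ℕ) (j : ℕ) : ℚ) *
          poch (c : ℚ) ((i : ℕ) - (j : ℕ)) / poch ((b : ℚ) + ((j : ℕ) + 1)) ((i : ℕ) - (j : ℕ))
      else 0
    let T : Matrix (Fin a) (Fin a) ℚ := Matrix.of fun i j =>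
      if (i : ℕ) ≤ (j : ℕ) then
        (-1 : ℚ) ^ ((i : ℕ) + (j : ℕ)) * (Nat.choose (j : ℕ) (i : ℕ) : ℚ) *
          poch ((b : ℚ)) ((j : ℕ) - (i : ℕ)) / poch ((c : ℚ) + ((i : ℕ) + 1)) ((j : ℕ) - (i : ℕ))
      else 0
    let D : Matrix (Fin a) (Fin a) ℚ := Matrix.diagonal fun i =>
      (Nat.factorial (b + (i : ℕ)) : ℚ) * (Nat.factorial (c + (i : ℕ)) : ℚ) /
        ((Nat.factorial (b + c + (i : ℕ)) : ℚ) * (Nat.factorial (i : ℕ) : ℚ))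
    IsUnit M.det ∧ M⁻¹ = T * D * L := by
  intro M L T D
  have hL : L = macmahonFactor a b (-c) := by
    ext i k
    simp only [L, of_apply, macmahonFactor_apply]
    split_ifs with h
    exacts [neg_one_pow_mul_choose_mul_poch_div_poch b c h, rfl]
  have hT : T = (macmahonFactor a c (-b))ᵀ := by
    ext i k
    simp only [T, of_apply, transpose_apply, macmahonFactor_apply, add_comm (i : ℕ)]
    split_ifs with h
    exacts [neg_one_pow_mul_choose_mul_poch_div_poch c b h, rfl]
  have hD : diagonal (fun m : Fin a =>
      ((b + (m : ℕ))! * (c + (m : ℕ))! / ((b + c + (m : ℕ))! * (m : ℕ)!) : ℚ)⁻¹) * D = 1 := by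
    rw [diagonal_mul_diagonal, ← diagonal_one]
    exact congrArg _ (funext fun m => inv_mul_cancel₀ (by positivity))
  have hinv : M * (T * D * L) = 1 := by
    rw [show M = _ from macmahon_eq_mul a b c, hT, hL]
    simp only [Matrix.mul_assoc]
    rw [← Matrix.mul_assoc (macmahonFactor a c b)ᵀ, ← transpose_mul, macmahonFactor_mul, neg_add_cancel,
      macmahonFactor_zero, transpose_one, Matrix.one_mul, ← Matrix.mul_assoc _ D, hD, Matrix.one_mul,
      macmahonFactor_mul, add_neg_cancel, macmahonFactor_zero]
  exact ⟨isUnit_det_of_right_inverse hinv, inv_eq_right_inv hinv⟩
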